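/- arXiv:1902.10738 — 5 statements merged into one kernel-verified Lean document; each statement's English description precedes it below -/
import Mathlib

section
/- (Theorem 2: coded communication load.) Let P ≥ 1, m_1,…,m_P ≥ 2 integers, r_1,…,r_P positive integers, r = Σ_p r_p with r ≥ 2, and let η1, η2, Y be positive integers with (m_p − 1) ∣ Y for all p. Set N = η1·∏_p m_p^{r_p}, X = ∏_p m_p^{r_p}, and Q = η2·Y·Σ_p r_p·m_p/(m_p − 1). The coded Shuffle phase consists of X multicast groups in each of which every one of the r member nodes transmits a coded message of η1·η2·Y/(r − 1) intermediate values; hence the coded communication load L_c = (1/(Q·N))·X·r·(η1·η2·Y/(r − 1)) satisfies L_c = (1/(r − 1))·r/(Σ_{p=1}^{P} r_p·m_p/(m_p − 1)), i.e., L_c = L_u/(r − 1) where L_u = r/(Σ_p r_p·m_p/(m_p − 1)). -/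
theorem one_div_mul_mul_div_sub_one_cancel {K : Type*} [Field K] (a b c X S r : K)
    (h : a * b * c * X ≠ 0) :
    1 / (b * c * S * (a * X)) * X * r * (a * b * c / (r - 1)) = 1 / (r - 1) * (r / S) :=
  calc _ = 1 / (r - 1) * (r / S) * ((a * b * c * X) / (a * b * c * X)) := by ring
    _ = _ := by rw [div_self h, mul_one]

theorem stmt_4_general (P : ℕ) (m rp : Fin P → ℕ)
    (hm : ∀ p, 2 ≤ m p)
    (r : ℕ)
    (η1 η2 Y : ℕ) (hη1 : 0 < η1) (hη2 : 0 < η2) (hY : 0 < Y)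
    (N X Q Lc Lu : ℝ)
    (hN : N = (η1 : ℝ) * ∏ p, (m p : ℝ) ^ (rp p))
    (hX : X = ∏ p, (m p : ℝ) ^ (rp p))
    (hQ : Q = (η2 : ℝ) * Y * ∑ p, (rp p : ℝ) * (m p) / ((m p : ℝ) - 1))
    (hLc : Lc = (1 / (Q * N)) * X * r * ((η1 : ℝ) * η2 * Y / ((r : ℝ) - 1)))
    (hLu : Lu = (r : ℝ) / ∑ p, (rp p : ℝ) * (m p) / ((m p : ℝ) - 1)) :
    Lc = (1 / ((r : ℝ) - 1)) *
        ((r : ℝ) / ∑ p, (rp p : ℝ) * (m p) / ((m p : ℝ) - 1)) ∧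
    Lc = Lu / ((r : ℝ) - 1) := by
  have hX_ne : ∏ p, (m p : ℝ) ^ (rp p) ≠ 0 :=
    Finset.prod_ne_zero_iff.2 fun p _ => pow_ne_zero _ (by have := hm p; positivity)
  have hLc_eq : Lc = (1 / ((r : ℝ) - 1)) *
      ((r : ℝ) / ∑ p, (rp p : ℝ) * (m p) / ((m p : ℝ) - 1)) := by
    rw [hLc, hQ, hN, hX]
    exact one_div_mul_mul_div_sub_one_cancel _ _ _ _ _ _
      (by simp [hη1.ne', hη2.ne', hY.ne', hX_ne])
  exact ⟨hLc_eq, by rw [hLc_eq, hLu]; ring⟩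

/-- **Theorem 2: coded communication load.** With `P ≥ 1` classes,
`m p ≥ 2`, `rp p ≥ 1`, `r = ∑ p, rp p ≥ 2`, positive `η1, η2, Y` with `(m p - 1) ∣ Y`,
`N = η1 * ∏ p, (m p)^(rp p)`, `X = ∏ p, (m p)^(rp p)` and
`Q = η2 * Y * ∑ p, rp p * m p / (m p - 1)`, the coded Shuffle phase consists of `X`
multicast groups in each of which every one of the `r` member nodes transmits a coded
message of `η1 * η2 * Y / (r - 1)` intermediate values; hence the coded communication
load `L_c = (1/(Q*N)) * X * r * (η1 * η2 * Y / (r - 1))` satisfies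
`L_c = (1/(r-1)) * r / (∑ p, rp p * m p / (m p - 1))`, i.e. `L_c = L_u / (r - 1)`. -/
theorem stmt_4 (P : ℕ) (hP : 1 ≤ P) (m rp : Fin P → ℕ)
    (hm : ∀ p, 2 ≤ m p) (hrp : ∀ p, 1 ≤ rp p)
    (r : ℕ) (hr : r = ∑ p, rp p) (hr2 : 2 ≤ r)
    (η1 η2 Y : ℕ) (hη1 : 0 < η1) (hη2 : 0 < η2) (hY : 0 < Y)
    (hdvd : ∀ p, (m p - 1) ∣ Y)
    (N X Q Lc Lu : ℝ)
    (hN : N = (η1 : ℝ) * ∏ p, (m p : ℝ) ^ (rp p))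
    (hX : X = ∏ p, (m p : ℝ) ^ (rp p))
    (hQ : Q = (η2 : ℝ) * Y * ∑ p, (rp p : ℝ) * (m p) / ((m p : ℝ) - 1))
    (hLc : Lc = (1 / (Q * N)) * X * r * ((η1 : ℝ) * η2 * Y / ((r : ℝ) - 1)))
    (hLu : Lu = (r : ℝ) / ∑ p, (rp p : ℝ) * (m p) / ((m p : ℝ) - 1)) :
    Lc = (1 / ((r : ℝ) - 1)) *
        ((r : ℝ) / ∑ p, (rp p : ℝ) * (m p) / ((m p : ℝ) - 1)) ∧
    Lc = Lu / ((r : ℝ) - 1) :=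
  stmt_4_general P m rp hm r η1 η2 Y hη1 hη2 hY N X Q Lc Lu hN hX hQ hLc hLu
end

section
/- Let P ≥ 1, m_1,…,m_P ≥ 2 integers, r_1,…,r_P positive integers, r = Σ_p r_p ≥ 2, K = Σ_p m_p·r_p. Then the coded communication load of the heterogeneous scheme satisfies L_c = r/((r − 1)·Σ_p r_p·m_p/(m_p − 1)) ≤ (1/(r − 1))·(1 − r/K). -/
/-! Write `a_p = m_p - 1 > 0`. Then `∑ r_p m_p / (m_p - 1) = r + T` and `K = r + U` with
`T = ∑ r_p / a_p` and `U = ∑ r_p a_p`, and the claim reduces to `r / (r + T) ≤ U / (r + U)`,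
i.e. to `r² ≤ T U`, which is Cauchy–Schwarz for the vectors `(√(r_p / a_p))` and `(√(r_p a_p))`. -/

open Finset

theorem sq_sum_le_sum_div_mul_sum_mul {ι : Type*} {s : Finset ι} {w a : ι → ℝ}
    (hw : ∀ i ∈ s, 0 ≤ w i) (ha : ∀ i ∈ s, 0 < a i) :
    (∑ i ∈ s, w i) ^ 2 ≤ (∑ i ∈ s, w i / a i) * ∑ i ∈ s, w i * a i :=
  sum_sq_le_sum_mul_sum_of_sq_le_mul s
    (fun i hi => div_nonneg (hw i hi) (ha i hi).le)
    (fun i hi => mul_nonneg (hw i hi) (ha i hi).le)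
    (fun i hi => (by field_simp [(ha i hi).ne'] : w i ^ 2 = w i / a i * (w i * a i)).le)

theorem div_add_le_one_sub_div_add {r T U : ℝ} (hr : 0 < r) (hT : 0 ≤ T) (hU : 0 ≤ U)
    (h : r ^ 2 ≤ T * U) : r / (r + T) ≤ 1 - r / (r + U) := by
  rw [one_sub_div (by positivity), add_sub_cancel_left, div_le_div_iff₀ (by positivity)
    (by positivity)]
  nlinarith

theorem stmt_6_general (P : ℕ) (m rp : Fin P → ℕ)
    (hm : ∀ p, 2 ≤ m p)
    (r K : ℕ) (hr : r = ∑ p, rp p) (hr2 : 2 ≤ r) (hK : K = ∑ p, m p * rp p)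
    (Lc : ℝ)
    (hLc : Lc = (r : ℝ) /
      (((r : ℝ) - 1) * ∑ p, (rp p : ℝ) * (m p) / ((m p : ℝ) - 1))) :
    Lc ≤ (1 / ((r : ℝ) - 1)) * (1 - (r : ℝ) / (K : ℝ)) := by
  have ha : ∀ p, (0 : ℝ) < (m p : ℝ) - 1 := fun p => by
    have : (2 : ℝ) ≤ m p := by exact_mod_cast hm p
    linarith
  have hr_real : (r : ℝ) = ∑ p, (rp p : ℝ) := by rw [hr]; push_cast; rfl
  have hS : ∑ p, (rp p : ℝ) * (m p) / ((m p : ℝ) - 1)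
      = r + ∑ p, (rp p : ℝ) / ((m p : ℝ) - 1) := by
    rw [hr_real, ← sum_add_distrib]
    refine sum_congr rfl fun p _ => ?_
    field_simp [(ha p).ne']
    ring
  have hK_real : (K : ℝ) = r + ∑ p, (rp p : ℝ) * ((m p : ℝ) - 1) := by
    rw [hK, hr_real, ← sum_add_distrib]
    push_cast
    exact sum_congr rfl fun p _ => by ring
  have hCS := sq_sum_le_sum_div_mul_sum_mul (s := univ) (w := fun p => (rp p : ℝ))
    (fun p _ => Nat.cast_nonneg _) (fun p _ => ha p)
  rw [← hr_real] at hCS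
  have hT : 0 ≤ ∑ p, (rp p : ℝ) / ((m p : ℝ) - 1) :=
    sum_nonneg fun p _ => div_nonneg (Nat.cast_nonneg _) (ha p).le
  have hU : 0 ≤ ∑ p, (rp p : ℝ) * ((m p : ℝ) - 1) :=
    sum_nonneg fun p _ => mul_nonneg (Nat.cast_nonneg _) (ha p).le
  have hr1 : (1 : ℝ) ≤ r := by exact_mod_cast (by omega : 1 ≤ r)
  rw [hLc, hS, hK_real, ← div_div, div_eq_mul_one_div _ ((r : ℝ) - 1), mul_comm, mul_div_assoc]
  exact mul_le_mul_of_nonneg_left (div_add_le_one_sub_div_add (by linarith) hT hU hCS)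
    (one_div_nonneg.mpr (sub_nonneg.mpr hr1))

/-- Let `P ≥ 1`, `m p ≥ 2` integers, `rp p` positive integers,
`r = ∑ p, rp p ≥ 2`, `K = ∑ p, m p * rp p`.  Then the coded communication load of the
heterogeneous scheme satisfies
`L_c = r / ((r - 1) * ∑ p, rp p * m p / (m p - 1)) ≤ (1/(r-1)) * (1 - r/K)`. -/
theorem stmt_6 (P : ℕ) (hP : 1 ≤ P) (m rp : Fin P → ℕ)
    (hm : ∀ p, 2 ≤ m p) (hrp : ∀ p, 1 ≤ rp p)
    (r K : ℕ) (hr : r = ∑ p, rp p) (hr2 : 2 ≤ r) (hK : K = ∑ p, m p * rp p)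
    (Lc : ℝ)
    (hLc : Lc = (r : ℝ) /
      (((r : ℝ) - 1) * ∑ p, (rp p : ℝ) * (m p) / ((m p : ℝ) - 1))) :
    Lc ≤ (1 / ((r : ℝ) - 1)) * (1 - (r : ℝ) / (K : ℝ)) :=
  stmt_6_general P m rp hm r K hr hr2 hK Lc hLc
end

section
/- (The heterogeneous scheme can strictly beat the homogeneous scheme.) There exist P ≥ 1, integers m_1,…,m_P ≥ 2, and positive integers r_1,…,r_P with r = Σ_p r_p ≥ 2 and K = Σ_p m_p·r_p, such that L_c = r/((r − 1)·Σ_p r_p·m_p/(m_p − 1)) < (1/r)·(1 − r/K) = L_1. In particular, P = 2, (m_1, r_1) = (2, 4), (m_2, r_2) = (8, 2) gives r = 6, K = 24, L_c = 7/60 < 1/8 = L_1. -/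
/-- **the heterogeneous scheme can strictly beat the homogeneous one.**
There exist `P ≥ 1`, integers `m p ≥ 2`, positive integers `rp p` with
`r = ∑ p, rp p ≥ 2` and `K = ∑ p, m p * rp p`, such that
`L_c = r / ((r-1) * ∑ p, rp p * m p / (m p - 1)) < (1/r) * (1 - r/K) = L_1`.
In particular `P = 2`, `(m 1, r 1) = (2, 4)`, `(m 2, r 2) = (8, 2)` gives `r = 6`,
`K = 24`, `L_c = 7/60 < 1/8 = L_1`. -/
theorem stmt_8 :
    (∃ (P : ℕ) (m rp : Fin P → ℕ) (r K : ℕ), 1 ≤ P ∧ (∀ p, 2 ≤ m p) ∧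
      (∀ p, 1 ≤ rp p) ∧ r = ∑ p, rp p ∧ 2 ≤ r ∧ K = ∑ p, m p * rp p ∧
      (r : ℝ) / (((r : ℝ) - 1) * ∑ p, (rp p : ℝ) * (m p) / ((m p : ℝ) - 1)) <
        (1 / (r : ℝ)) * (1 - (r : ℝ) / (K : ℝ))) ∧
    (∑ p : Fin 2, (![4, 2] : Fin 2 → ℕ) p = 6) ∧
    (∑ p : Fin 2, (![2, 8] : Fin 2 → ℕ) p * (![4, 2] : Fin 2 → ℕ) p = 24) ∧
    ((6 : ℝ) / (((6 : ℝ) - 1) *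
        ∑ p : Fin 2, (((![4, 2] : Fin 2 → ℕ) p : ℝ) * ((![2, 8] : Fin 2 → ℕ) p) /
          (((![2, 8] : Fin 2 → ℕ) p : ℝ) - 1))) = 7 / 60) ∧
    ((1 / (6 : ℝ)) * (1 - (6 : ℝ) / 24) = 1 / 8) ∧
    ((7 : ℝ) / 60 < 1 / 8) := by
  have hr : ∑ p : Fin 2, (![4, 2] : Fin 2 → ℕ) p = 6 := by simp [Fin.sum_univ_two]
  have hK : ∑ p : Fin 2, (![2, 8] : Fin 2 → ℕ) p * (![4, 2] : Fin 2 → ℕ) p = 24 := by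
    simp [Fin.sum_univ_two]
  -- the weighted sum is 4·2/1 + 2·8/7 = 72/7, so L_c = 6·7/(5·72)
  have hL_c : (6 : ℝ) / (((6 : ℝ) - 1) *
      ∑ p : Fin 2, (((![4, 2] : Fin 2 → ℕ) p : ℝ) * ((![2, 8] : Fin 2 → ℕ) p) /
        (((![2, 8] : Fin 2 → ℕ) p : ℝ) - 1))) = 7 / 60 := by
    simp only [Fin.sum_univ_two]
    norm_num
  have hL_1 : (1 / (6 : ℝ)) * (1 - (6 : ℝ) / 24) = 1 / 8 := by norm_num
  have hlt : (7 : ℝ) / 60 < 1 / 8 := by norm_num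
  refine ⟨⟨2, ![2, 8], ![4, 2], 6, 24, by norm_num, by simp [Fin.forall_fin_two],
    by simp [Fin.forall_fin_two], hr.symm, by norm_num, hK.symm, ?_⟩, hr, hK, hL_c, hL_1, hlt⟩
  push_cast
  rw [hL_c, hL_1]
  exact hlt
end

section
/- (Asymptotics with fixed computation load.) Fix P ≥ 1 and positive integers r_1,…,r_P with r = Σ_p r_p ≥ 2, and let m : ℕ → ℕ^P be sequences with m_p(t) ≥ 2 for all t and m_p(t) → ∞ as t → ∞ for each p. Define K(t) = Σ_p m_p(t)·r_p, L_c(t) = r/((r − 1)·Σ_p r_p·m_p(t)/(m_p(t) − 1)), and L_1(t) = (1/r)·(1 − r/K(t)). Then L_c(t)/L_1(t) → r/(r − 1) as t → ∞. -/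
/-!
Each summand `r_p m_p / (m_p - 1)` tends to `r_p`, so `L_c → r / ((r - 1) r)`; and `K → ∞`
because some `r_p` is nonzero, so `L_1 → 1 / r`. The quotient tends to `r / (r - 1)`.
-/

open Filter Topology

theorem tendsto_div_sub_one_atTop : Tendsto (fun x : ℝ => x / (x - 1)) atTop (𝓝 1) := by
  have h : Tendsto (fun x : ℝ => 1 + 1 / (x - 1)) atTop (𝓝 (1 + 0)) :=
    tendsto_const_nhds.add
      (tendsto_const_nhds.div_atTop (tendsto_atTop_add_const_right _ _ tendsto_id))
  rw [add_zero] at h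
  refine h.congr' ?_
  filter_upwards [eventually_gt_atTop 1] with x hx
  field_simp [(sub_pos.2 hx).ne']
  ring

theorem tendsto_sum_mul_div_natCast_sub_one {α ι : Type*} [Fintype ι] {l : Filter α}
    (w : ι → ℝ) {f : α → ι → ℕ} (hf : ∀ i, Tendsto (f · i) l atTop) :
    Tendsto (fun a => ∑ i, w i * f a i / ((f a i : ℝ) - 1)) l (𝓝 (∑ i, w i)) := by
  refine tendsto_finsetSum _ fun i _ => ?_
  simp_rw [mul_div_assoc]
  simpa using (tendsto_div_sub_one_atTop.comp
    (tendsto_natCast_atTop_atTop.comp (hf i))).const_mul (w i)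

theorem tendsto_sum_natCast_mul_atTop {α ι : Type*} [Fintype ι] {l : Filter α} {w : ι → ℕ}
    (hw : ∃ i, w i ≠ 0) {f : α → ι → ℕ} (hf : ∀ i, Tendsto (f · i) l atTop) :
    Tendsto (fun a => ∑ i, (f a i : ℝ) * w i) l atTop := by
  obtain ⟨i, hi⟩ := hw
  refine tendsto_atTop_mono (fun a => ?_) (tendsto_natCast_atTop_atTop.comp (hf i))
  calc (f a i : ℝ)
      ≤ f a i * w i :=
        le_mul_of_one_le_right (by positivity) (by exact_mod_cast Nat.one_le_iff_ne_zero.2 hi)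
    _ ≤ ∑ j, (f a j : ℝ) * w j :=
        Finset.single_le_sum (f := fun j => (f a j : ℝ) * w j) (fun j _ => by positivity)
          (Finset.mem_univ i)

theorem stmt_9_general (P : ℕ) (rp : Fin P → ℕ)
    (r : ℕ) (hr : r = ∑ p, rp p) (hr2 : 2 ≤ r)
    (m : ℕ → Fin P → ℕ)
    (hmtop : ∀ p, Tendsto (fun t => m t p) atTop atTop)
    (K Lc L1 : ℕ → ℝ)
    (hK : ∀ t, K t = ∑ p, (m t p : ℝ) * (rp p))
    (hLc : ∀ t, Lc t = (r : ℝ) /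
      (((r : ℝ) - 1) * ∑ p, (rp p : ℝ) * (m t p) / ((m t p : ℝ) - 1)))
    (hL1 : ∀ t, L1 t = (1 / (r : ℝ)) * (1 - (r : ℝ) / K t)) :
    Tendsto (fun t => Lc t / L1 t) atTop (nhds ((r : ℝ) / ((r : ℝ) - 1))) := by
  have hr_two : (2 : ℝ) ≤ r := by exact_mod_cast hr2
  have hsum : ∑ p, (rp p : ℝ) = r := by rw [hr]; push_cast; rfl
  have hS := tendsto_sum_mul_div_natCast_sub_one (fun p => (rp p : ℝ)) hmtop
  rw [hsum] at hS
  have hrp : ∃ p, rp p ≠ 0 := by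
    by_contra! h
    simp only [h, Finset.sum_const_zero] at hr
    omega
  have hKtop : Tendsto K atTop atTop := by
    simpa only [← funext hK] using tendsto_sum_natCast_mul_atTop hrp hmtop
  have hLc_lim : Tendsto Lc atTop (𝓝 (r / ((r - 1) * r))) := by
    rw [funext hLc]
    exact tendsto_const_nhds.div (tendsto_const_nhds.mul hS) (by nlinarith)
  have hL1_lim : Tendsto L1 atTop (𝓝 (1 / r)) := by
    rw [funext hL1]
    simpa only [sub_zero, mul_one] using
      (tendsto_const_nhds (x := 1 / (r : ℝ))).mul
        ((tendsto_const_nhds (x := (1 : ℝ))).sub (tendsto_const_nhds.div_atTop hKtop))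
  have hlim : (r : ℝ) / ((r - 1) * r) / (1 / r) = r / (r - 1) := by
    field_simp
  rw [← hlim]
  exact hLc_lim.div hL1_lim (by positivity)

/-- **asymptotics with fixed computation load.** Fix `P ≥ 1` and positive
integers `rp p` with `r = ∑ p, rp p ≥ 2`, and let `m t p ≥ 2` with `m t p → ∞` as
`t → ∞` for each `p`.  With `K t = ∑ p, m t p * rp p`,
`L_c t = r / ((r - 1) * ∑ p, rp p * m t p / (m t p - 1))` and
`L_1 t = (1/r) * (1 - r / K t)`, one has `L_c t / L_1 t → r / (r - 1)` as `t → ∞`. -/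
theorem stmt_9 (P : ℕ) (hP : 1 ≤ P) (rp : Fin P → ℕ) (hrp : ∀ p, 1 ≤ rp p)
    (r : ℕ) (hr : r = ∑ p, rp p) (hr2 : 2 ≤ r)
    (m : ℕ → Fin P → ℕ) (hm : ∀ t p, 2 ≤ m t p)
    (hmtop : ∀ p, Tendsto (fun t => m t p) atTop atTop)
    (K Lc L1 : ℕ → ℝ)
    (hK : ∀ t, K t = ∑ p, (m t p : ℝ) * (rp p))
    (hLc : ∀ t, Lc t = (r : ℝ) /
      (((r : ℝ) - 1) * ∑ p, (rp p : ℝ) * (m t p) / ((m t p : ℝ) - 1)))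
    (hL1 : ∀ t, L1 t = (1 / (r : ℝ)) * (1 - (r : ℝ) / K t)) :
    Tendsto (fun t => Lc t / L1 t) atTop (nhds ((r : ℝ) / ((r : ℝ) - 1))) :=
  stmt_9_general P rp r hr hr2 m hmtop K Lc L1 hK hLc hL1
end

section
/- (Asymptotics with computation load growing linearly in K.) Fix P ≥ 1, integers m_1,…,m_P ≥ 2, and positive integers c_1,…,c_P, and for t ≥ 1 set r_p(t) = t·c_p, r(t) = t·Σ_p c_p, K(t) = t·Σ_p m_p·c_p, L_c(t) = r(t)/((r(t) − 1)·Σ_p r_p(t)·m_p/(m_p − 1)) and L_1(t) = (1/r(t))·(1 − r(t)/K(t)). Then as t → ∞, L_c(t)/L_1(t) → L_u/(1 − ρ), where L_u = (Σ_p c_p)/(Σ_p c_p·m_p/(m_p − 1)) and ρ = (Σ_p c_p)/(Σ_p m_p·c_p) are constants; moreover L_u/(1 − ρ) ≤ 1. -/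
/-!
Put `A = ∑ c p`, `B = ∑ c p m p / (m p - 1)` and `C = ∑ m p c p`. Both loads scale exactly with `t`:
`L_c(t) / L_1(t) = (A / B) / (1 - A / C) · tA / (tA - 1)`, and `tA / (tA - 1) → 1`.
The bound `L_u / (1 - ρ) ≤ 1` is `A / B + A / C ≤ 1`. By Cauchy–Schwarz (weighted harmonic mean
≤ arithmetic mean), `A² / B ≤ ∑ c p (m p - 1) / m p` and `A² / C ≤ ∑ c p / m p`, and the two
right-hand sides add up to `A`.
-/

open Filter Finset

theorem Finset.sq_sum_div_sum_mul_le_sum_div {ι : Type*} (s : Finset ι) {w x : ι → ℝ}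
    (hw : ∀ i ∈ s, 0 ≤ w i) (hx : ∀ i ∈ s, 0 < x i) :
    (∑ i ∈ s, w i) ^ 2 / ∑ i ∈ s, w i * x i ≤ ∑ i ∈ s, w i / x i := by
  have hwx : 0 ≤ ∑ i ∈ s, w i * x i := sum_nonneg fun i hi => mul_nonneg (hw i hi) (hx i hi).le
  have cauchy_schwarz : (∑ i ∈ s, w i) ^ 2 ≤ (∑ i ∈ s, w i * x i) * ∑ i ∈ s, w i / x i :=
    sum_sq_le_sum_mul_sum_of_sq_le_mul s (fun i hi => mul_nonneg (hw i hi) (hx i hi).le)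
      (fun i hi => div_nonneg (hw i hi) (hx i hi).le) fun i hi =>
        le_of_eq (by field_simp [(hx i hi).ne'])
  exact div_le_of_le_mul₀ hwx (sum_nonneg fun i hi => div_nonneg (hw i hi) (hx i hi).le)
    (by rwa [mul_comm])

theorem Finset.sum_div_sum_mul_div_sub_one_add_sum_div_sum_mul_le_one {ι : Type*} (s : Finset ι)
    {c m : ι → ℝ} (hc : ∀ i ∈ s, 0 ≤ c i) (hm : ∀ i ∈ s, 1 < m i) (hA : 0 < ∑ i ∈ s, c i) :
    (∑ i ∈ s, c i) / (∑ i ∈ s, c i * m i / (m i - 1)) + (∑ i ∈ s, c i) / ∑ i ∈ s, m i * c i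
      ≤ 1 := by
  set A := ∑ i ∈ s, c i
  have harmonic_B : A ^ 2 / ∑ i ∈ s, c i * m i / (m i - 1) ≤ ∑ i ∈ s, c i / (m i / (m i - 1)) := by
    simp only [mul_div_assoc]
    exact s.sq_sum_div_sum_mul_le_sum_div hc fun i hi =>
      div_pos (by linarith [hm i hi]) (by linarith [hm i hi])
  have harmonic_C : A ^ 2 / ∑ i ∈ s, m i * c i ≤ ∑ i ∈ s, c i / m i := by
    simp only [mul_comm (m _)]
    exact s.sq_sum_div_sum_mul_le_sum_div hc fun i hi => by linarith [hm i hi]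
  have hsum : ∑ i ∈ s, c i / (m i / (m i - 1)) + ∑ i ∈ s, c i / m i = A := by
    rw [← sum_add_distrib]
    refine sum_congr rfl fun i hi => ?_
    have : m i ≠ 0 := by linarith [hm i hi]
    field_simp
    ring
  rw [← mul_le_mul_iff_right₀ hA, mul_one, mul_add, ← mul_div_assoc, ← mul_div_assoc, ← sq]
  linarith

theorem load_ratio_eq {A B C t : ℝ} (hA : A ≠ 0) (hB : B ≠ 0) (hC : C ≠ 0) (hAC : A ≠ C)
    (ht : t ≠ 0) (htA : t * A ≠ 1) :
    t * A / ((t * A - 1) * (t * B)) / (1 / (t * A) * (1 - t * A / (t * C)))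
      = A / B / (1 - A / C) * (t / (t + -A⁻¹)) := by
  have htA' : t * A - 1 ≠ 0 := sub_ne_zero.mpr htA
  have hCA : C - A ≠ 0 := sub_ne_zero.mpr hAC.symm
  rw [mul_div_mul_left _ _ ht, show t + -A⁻¹ = (t * A - 1) / A by field_simp; ring]
  field_simp

/-- **asymptotics with computation load growing linearly in `K`.**
Fix `P ≥ 1`, integers `m p ≥ 2` and positive integers `c p`, and for `t ≥ 1` set
`rp t p = t * c p`, `r t = t * ∑ p, c p`, `K t = t * ∑ p, m p * c p`,
`L_c t = r t / ((r t - 1) * ∑ p, (t * c p) * m p / (m p - 1))` and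
`L_1 t = (1 / r t) * (1 - r t / K t)`.  Then as `t → ∞`,
`L_c t / L_1 t → L_u / (1 - ρ)`, where
`L_u = (∑ p, c p) / (∑ p, c p * m p / (m p - 1))` and
`ρ = (∑ p, c p) / (∑ p, m p * c p)` are constants; moreover `L_u / (1 - ρ) ≤ 1`. -/
theorem stmt_10 (P : ℕ) (hP : 1 ≤ P) (m c : Fin P → ℕ)
    (hm : ∀ p, 2 ≤ m p) (hc : ∀ p, 1 ≤ c p)
    (r K Lc L1 : ℕ → ℝ)
    (hrt : ∀ t : ℕ, r t = (t : ℝ) * ∑ p, (c p : ℝ))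
    (hKt : ∀ t : ℕ, K t = (t : ℝ) * ∑ p, (m p : ℝ) * (c p))
    (hLc : ∀ t : ℕ, Lc t = r t /
      ((r t - 1) * ∑ p, ((t : ℝ) * (c p)) * (m p) / ((m p : ℝ) - 1)))
    (hL1 : ∀ t : ℕ, L1 t = (1 / r t) * (1 - r t / K t))
    (Lu ρ : ℝ)
    (hLu : Lu = (∑ p, (c p : ℝ)) / (∑ p, (c p : ℝ) * (m p) / ((m p : ℝ) - 1)))
    (hρ : ρ = (∑ p, (c p : ℝ)) / (∑ p, (m p : ℝ) * (c p))) :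
    Tendsto (fun t => Lc t / L1 t) atTop (nhds (Lu / (1 - ρ))) ∧ Lu / (1 - ρ) ≤ 1 := by
  set A := ∑ p, (c p : ℝ)
  set B := ∑ p, (c p : ℝ) * (m p) / ((m p : ℝ) - 1)
  set C := ∑ p, (m p : ℝ) * (c p)
  have hm1 : ∀ p ∈ univ, (1 : ℝ) < m p := fun p _ => by exact_mod_cast hm p
  have hc0 : ∀ p ∈ univ, (0 : ℝ) < c p := fun p _ => by exact_mod_cast hc p
  have hne : (univ : Finset (Fin P)).Nonempty := univ_nonempty_iff.mpr ⟨⟨0, hP⟩⟩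
  have hA : 0 < A := sum_pos hc0 hne
  have hB : 0 < B := sum_pos (fun p hp => div_pos (mul_pos (hc0 p hp) (by linarith [hm1 p hp]))
    (by linarith [hm1 p hp])) hne
  have hC : 0 < C := sum_pos (fun p hp => mul_pos (by linarith [hm1 p hp]) (hc0 p hp)) hne
  have hkey : Lu + ρ ≤ 1 := hLu ▸ hρ ▸
    univ.sum_div_sum_mul_div_sub_one_add_sum_div_sum_mul_le_one (fun p hp => (hc0 p hp).le) hm1 hA
  have hLu0 : 0 < Lu := hLu ▸ div_pos hA hB
  have hρ1 : 0 < 1 - ρ := by linarith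
  refine ⟨?_, (div_le_one hρ1).mpr (by linarith)⟩
  have hAC : A < C := (div_lt_one hC).mp (by linarith)
  have hratio : ∀ᶠ t : ℕ in atTop, Lu / (1 - ρ) * (t / (t + -A⁻¹)) = Lc t / L1 t := by
    filter_upwards [eventually_ge_atTop 2] with t ht
    have ht' : (2 : ℝ) ≤ t := by exact_mod_cast ht
    have hA1 : 1 ≤ A := (single_le_sum (fun p hp => (hc0 p hp).le) (mem_univ ⟨0, hP⟩)).trans'
      (by exact_mod_cast hc _)
    have htB : ∑ p, (t : ℝ) * c p * m p / ((m p : ℝ) - 1) = t * B := by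
      simp only [B, mul_sum, mul_assoc, mul_div_assoc]
    rw [hLc, hL1, hrt, hKt, htB, hLu, hρ,
      load_ratio_eq hA.ne' hB.ne' hC.ne' hAC.ne (by positivity) (by nlinarith)]
  simpa using ((tendsto_natCast_div_add_atTop _).const_mul (Lu / (1 - ρ))).congr' hratio
end
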